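/- Let V := (Fin 3 ⊕ Fin 3) → ZMod 2 with standard symplectic form ω(x, y) := x ⬝ᵥ (Matrix.J (Fin 3) (ZMod 2) *ᵥ y), and let Sp := Matrix.symplecticGroup (Fin 3) (ZMod 2) act on V by g • v := g.val *ᵥ v. Let R := MvPolynomial (Fin 3 ⊕ Fin 3) (ZMod 2) ⧸ I, where I is the ideal generated by the elements X i ^ 2 - X i, and define bar : V → R by bar v := (Σ_i (v i) • [X i]) + (Σ_{k : Fin 3} v (Sum.inl k) * v (Sum.inr k)) • 1. Let B² be the ZMod 2-submodule of R spanned by 1, the elements bar(e_i) for the standard basis vectors e_i of V, and the products bar(e_i) * bar(e_j) for i ≠ j. Suppose ρ : Sp →* RingAut R is a group homomorphism such that ρ(g) (bar v) = bar (g • v) for all g ∈ Sp and v ∈ V, and let N be the ZMod 2-submodule of R spanned by the set { ρ(g) m - m : g ∈ Sp, m ∈ B² }. Then (1 : R) ∈ N. -/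

import Mathlib

/-! The symplectic transvection `τ_v x = x + ω(x, v) v` is turned by Johnson's map into
`(τ_v x)‾ = x̄ + ω(x, v) (v̄ + 1)`, because `R` is a Boolean ring and
`(x + y)‾ = x̄ + ȳ + ω(x, y)`. Take `a, b, c, d` to be the basis vectors
`e (inl 0), e (inr 0), e (inl 1), e (inr 1)`. Applying `τ_c` to `d̄`, `τ_b` to `c̄ ā` and
`τ_{b+c}` to `ā b̄` puts `c̄ + 1`, `c̄ b̄ + c̄` and `(b̄ + c̄ + 1) b̄ = c̄ b̄` into `N`, hence
`1 = (c̄ + 1) - (c̄ b̄ + c̄) + c̄ b̄ ∈ N`. -/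

open Matrix

noncomputable section

/-- `V = H₁(Σ₃; ZMod 2)`, a 6-dimensional symplectic vector space over `ZMod 2`. -/
abbrev SympV : Type := (Fin 3 ⊕ Fin 3) → ZMod 2

/-- The standard symplectic form `ω(x, y) = x ⬝ᵥ (J *ᵥ y)`. -/
def sympForm (x y : SympV) : ZMod 2 := x ⬝ᵥ (Matrix.J (Fin 3) (ZMod 2) *ᵥ y)

/-- The ideal generated by `X i ^ 2 - X i` for `i : Fin 3 ⊕ Fin 3`. -/
def boolIdeal : Ideal (MvPolynomial (Fin 3 ⊕ Fin 3) (ZMod 2)) :=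
  Ideal.span (Set.range fun i : Fin 3 ⊕ Fin 3 =>
    MvPolynomial.X i ^ 2 - MvPolynomial.X i)

/-- The Boolean polynomial algebra `R` on six generators over `ZMod 2`. -/
abbrev BoolR : Type := MvPolynomial (Fin 3 ⊕ Fin 3) (ZMod 2) ⧸ boolIdeal

/-- Johnson's map `bar : V → R`,
`v ↦ Σ_i (v i) • [X i] + (Σ_k v(inl k) * v(inr k)) • 1`. -/
def bar (v : SympV) : BoolR :=
  (∑ i : Fin 3 ⊕ Fin 3, (v i) • (Ideal.Quotient.mk boolIdeal (MvPolynomial.X i))) +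
    (∑ k : Fin 3, v (Sum.inl k) * v (Sum.inr k)) • (1 : BoolR)

/-- `B²`: the `ZMod 2`-submodule of `R` spanned by `1`, the `bar (e i)` for the standard
basis vectors `e i`, and the products `bar (e i) * bar (e j)` for `i ≠ j`. -/
def Bsq : Submodule (ZMod 2) BoolR :=
  Submodule.span (ZMod 2)
    ({(1 : BoolR)} ∪
      (Set.range fun i : Fin 3 ⊕ Fin 3 => bar (Pi.single i 1 : SympV)) ∪
      {x : BoolR | ∃ i j : Fin 3 ⊕ Fin 3, i ≠ j ∧
        x = bar (Pi.single i 1 : SympV) * bar (Pi.single j 1 : SympV)})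

section Transvection

variable {l R : Type*} [Fintype l] [DecidableEq l] [CommRing R]

theorem dotProduct_J_mulVec_self (v : l ⊕ l → R) : v ⬝ᵥ (J l R *ᵥ v) = 0 := by
  simp [J, fromBlocks_mulVec, dotProduct, Fintype.sum_sum_type, neg_mulVec, mul_comm]

theorem J_mulVec_vecMul_J (v : l ⊕ l → R) : (J l R *ᵥ v) ᵥ* J l R = v := by
  rw [← vecMul_transpose, vecMul_vecMul, J_transpose, Matrix.neg_mul, J_squared, neg_neg,
    vecMul_one]

theorem one_add_vecMulVec_J_mem_symplecticGroup (v : l ⊕ l → R) :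
    1 + vecMulVec v (J l R *ᵥ v) ∈ symplecticGroup l R := by
  rw [SymplecticGroup.mem_iff, transpose_add, transpose_one, transpose_vecMulVec, Matrix.add_mul,
    Matrix.one_mul, vecMulVec_mul, J_mulVec_vecMul_J, Matrix.add_mul, Matrix.mul_add,
    Matrix.mul_add, Matrix.mul_one, mul_vecMulVec, mulVec_mulVec, J_squared, neg_mulVec,
    one_mulVec, Matrix.mul_one, vecMulVec_mul_vecMulVec, dotProduct_J_mulVec_self, zero_smul,
    vecMulVec_zero, add_zero, neg_vecMulVec]
  abel

def symplecticTransvection (v : l ⊕ l → R) : symplecticGroup l R :=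
  ⟨1 + vecMulVec v (J l R *ᵥ v), one_add_vecMulVec_J_mem_symplecticGroup v⟩

theorem symplecticTransvection_mulVec (v x : l ⊕ l → R) :
    (symplecticTransvection v).val *ᵥ x = x + (x ⬝ᵥ (J l R *ᵥ v)) • v := by
  rw [symplecticTransvection, add_mulVec, one_mulVec, vecMulVec_mulVec, op_smul_eq_smul,
    dotProduct_comm]

end Transvection

theorem sympForm_eq_sum (x y : SympV) :
    sympForm x y = ∑ k, (x (.inl k) * y (.inr k) + x (.inr k) * y (.inl k)) := by
  simp [sympForm, J, fromBlocks_mulVec, dotProduct, Fintype.sum_sum_type, neg_mulVec,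
    ZMod.neg_eq_self_mod_two, Finset.sum_add_distrib]

theorem sympForm_comm (x y : SympV) : sympForm x y = sympForm y x := by
  simp only [sympForm_eq_sum, mul_comm, add_comm]

theorem sympForm_self (x : SympV) : sympForm x x = 0 :=
  dotProduct_J_mulVec_self x

theorem sympForm_add_right (x y z : SympV) :
    sympForm x (y + z) = sympForm x y + sympForm x z := by
  simp only [sympForm, mulVec_add, dotProduct_add]

theorem two_eq_zero_boolR : (2 : BoolR) = 0 := by
  rw [← map_ofNat (algebraMap (ZMod 2) BoolR) 2, show (2 : ZMod 2) = 0 from rfl, map_zero]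

theorem isIdempotentElem_mk_X (i : Fin 3 ⊕ Fin 3) :
    IsIdempotentElem (Ideal.Quotient.mk boolIdeal (MvPolynomial.X i)) := by
  rw [IsIdempotentElem, ← map_mul, ← sq, Ideal.Quotient.eq]
  exact Ideal.subset_span ⟨i, rfl⟩

theorem isIdempotentElem_boolR (x : BoolR) : IsIdempotentElem x := by
  obtain ⟨p, rfl⟩ := Ideal.Quotient.mk_surjective x
  induction p using MvPolynomial.induction_on with
  | C a =>
    rw [IsIdempotentElem, ← map_mul, ← MvPolynomial.C_mul]
    congr 2
    fin_cases a <;> rfl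
  | add p q hp hq =>
    rw [IsIdempotentElem, map_add]
    linear_combination hp.eq + hq.eq +
      Ideal.Quotient.mk boolIdeal p * Ideal.Quotient.mk boolIdeal q * two_eq_zero_boolR
  | mul_X p i hp =>
    rw [map_mul]
    exact hp.mul (isIdempotentElem_mk_X i)

theorem bar_add (x y : SympV) : bar (x + y) = bar x + bar y + sympForm x y • 1 := by
  have hq : ∑ k, (x + y) (.inl k) * (x + y) (.inr k) =
      ∑ k, x (.inl k) * x (.inr k) + ∑ k, y (.inl k) * y (.inr k) + sympForm x y := by
    simp only [sympForm_eq_sum, Pi.add_apply, ← Finset.sum_add_distrib]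
    congr 1; ext k; ring
  rw [bar, hq]
  simp only [bar, Pi.add_apply, add_smul, Finset.sum_add_distrib]
  abel

theorem bar_symplecticTransvection_mulVec (v x : SympV) :
    bar ((symplecticTransvection v).val *ᵥ x) = bar x + sympForm x v • (bar v + 1) := by
  rw [symplecticTransvection_mulVec]
  change bar (x + sympForm x v • v) = _
  obtain h | h : sympForm x v = 0 ∨ sympForm x v = 1 := by
    generalize sympForm x v = t; revert t; decide
  · simp only [h, zero_smul, add_zero]
  · simp only [h, one_smul, bar_add, add_assoc]

theorem bar_single_mem_Bsq (i : Fin 3 ⊕ Fin 3) : bar (Pi.single i 1) ∈ Bsq :=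
  Submodule.subset_span (Or.inl (Or.inr ⟨i, rfl⟩))

theorem bar_single_mul_bar_single_mem_Bsq {i j : Fin 3 ⊕ Fin 3} (hij : i ≠ j) :
    bar (Pi.single i 1) * bar (Pi.single j 1) ∈ Bsq :=
  Submodule.subset_span (Or.inr ⟨i, j, hij, rfl⟩)

theorem one_mem_span_coinvariant_relations_of_sympForm
    (ρ : symplecticGroup (Fin 3) (ZMod 2) → RingAut BoolR)
    (hρ : ∀ g v, ρ g (bar v) = bar (g.val *ᵥ v)) {B : Submodule (ZMod 2) BoolR}
    {a b c d : SympV} (hab : sympForm a b = 1) (hac : sympForm a c = 0)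
    (hbc : sympForm b c = 0) (hdc : sympForm d c = 1)
    (hd_mem : bar d ∈ B) (hca_mem : bar c * bar a ∈ B) (hab_mem : bar a * bar b ∈ B) :
    (1 : BoolR) ∈ Submodule.span (ZMod 2) {x | ∃ g m, m ∈ B ∧ x = ρ g m - m} := by
  have rel : ∀ g, ∀ m ∈ B,
      ρ g m - m ∈ Submodule.span (ZMod 2) {x | ∃ g m, m ∈ B ∧ x = ρ g m - m} :=
    fun g m hm => Submodule.subset_span ⟨g, m, hm, rfl⟩
  have hτ : ∀ v x, ρ (symplecticTransvection v) (bar x) = bar x + sympForm x v • (bar v + 1) :=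
    fun v x => by rw [hρ, bar_symplecticTransvection_mulVec]
  have key : (1 : BoolR) =
      (ρ (symplecticTransvection c) (bar d) - bar d) -
      (ρ (symplecticTransvection b) (bar c * bar a) - bar c * bar a) +
      (ρ (symplecticTransvection (b + c)) (bar a * bar b) - bar a * bar b) := by
    simp only [map_mul, hτ, bar_add, sympForm_add_right, sympForm_self, sympForm_comm c b,
      hab, hac, hbc, hdc, one_smul, zero_smul, add_zero]
    linear_combination -(isIdempotentElem_boolR (bar b)).eq - bar b * two_eq_zero_boolR
  rw [key]
  exact add_mem (sub_mem (rel _ _ hd_mem) (rel _ _ hca_mem)) (rel _ _ hab_mem)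

/-- Final computation in the paper's Lemma: the constant `1` lies in the submodule `N`
spanned by the elements `ρ(g) m - m` with `m ∈ B²`. -/
theorem one_mem_span_coinvariant_relations
    (ρ : Matrix.symplecticGroup (Fin 3) (ZMod 2) →* RingAut BoolR)
    (hρ : ∀ (g : Matrix.symplecticGroup (Fin 3) (ZMod 2)) (v : SympV),
      ρ g (bar v) = bar (g.val *ᵥ v)) :
    (1 : BoolR) ∈ Submodule.span (ZMod 2)
      {x : BoolR | ∃ (g : Matrix.symplecticGroup (Fin 3) (ZMod 2)) (m : BoolR),
        m ∈ Bsq ∧ x = ρ g m - m} :=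
  one_mem_span_coinvariant_relations_of_sympForm ρ hρ
    (a := Pi.single (.inl 0) 1) (b := Pi.single (.inr 0) 1)
    (c := Pi.single (.inl 1) 1) (d := Pi.single (.inr 1) 1)
    (by decide) (by decide) (by decide) (by decide) (bar_single_mem_Bsq _)
    (bar_single_mul_bar_single_mem_Bsq (by decide))
    (bar_single_mul_bar_single_mem_Bsq (by decide))

end
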